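/- arXiv:1803.01055 — 2 statements merged into one kernel-verified Lean document; each statement's English description precedes it below -/
import Mathlib

section
/- Let G be a word-representable (i.e., 0-11-representable) simple graph and let K be a subset of its vertex set. Then the graph G_K, obtained from G by deleting all edges whose both endpoints lie in K (keeping all vertices), is 1-11-representable. -/
/-!
A word-representable graph has a uniform representant `w`, in which every vertex occurs equally
often: appending the under-represented letters, in the order of their last occurrences, keeps
every alternating pair alternating, because the last letter of an alternating two-letter word is
one of its most frequent letters. For an edge `xy` the restriction of `w` to `{x, y}` then starts
and ends with different letters, so the restriction of `w ++ w` still alternates, while for a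
non-edge it contains `11` at least twice. Doubling the first occurrence of every vertex of `K`
adds exactly one `11` to the restriction for each endpoint in `K`, so an edge survives with at
most one `11` iff at most one of its endpoints lies in `K`.
-/

/-- Number of occurrences of the consecutive pattern 11 in a word,
i.e. the number of positions `i` with `u i = u (i+1)`. -/
def pattern11Count {V : Type*} [DecidableEq V] (u : List V) : ℕ :=
  (u.zip u.tail).countP (fun p => decide (p.1 = p.2))

/-- `w` is a `k`-11-representant of the simple graph `G`: every vertex occurs in `w`,
and two distinct vertices are adjacent iff the subword of `w` induced by them contains
at most `k` occurrences of the consecutive pattern 11. -/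
def IsK11Rep {V : Type*} [DecidableEq V] (G : SimpleGraph V) (k : ℕ) (w : List V) : Prop :=
  (∀ v : V, v ∈ w) ∧
  ∀ x y : V, x ≠ y →
    (G.Adj x y ↔ pattern11Count (w.filter (fun a => decide (a = x ∨ a = y))) ≤ k)

/-- A simple graph is `k`-11-representable if it has a `k`-11-representant. -/
def K11Representable {V : Type*} [DecidableEq V] (G : SimpleGraph V) (k : ℕ) : Prop :=
  ∃ w : List V, IsK11Rep G k w

/-- A graph is `t`-uniformly `k`-11-representable if it has a `k`-11-representant in which
every vertex occurs exactly `t` times. -/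
def UniformK11Rep {V : Type*} [DecidableEq V] (G : SimpleGraph V) (t k : ℕ) : Prop :=
  ∃ w : List V, IsK11Rep G k w ∧ ∀ v : V, w.count v = t

/-- The final permutation `σ(w)`: distinct letters of `w` in order of last occurrence. -/
def finalPerm {V : Type*} [DecidableEq V] (w : List V) : List V := w.dedup

/-- The initial permutation `π(w)`: distinct letters of `w` in order of first occurrence. -/
def initPerm {V : Type*} [DecidableEq V] (w : List V) : List V := (w.reverse.dedup).reverse

section

variable {V : Type*} [DecidableEq V]

@[simp]
theorem pattern11Count_nil : pattern11Count ([] : List V) = 0 := rfl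

@[simp]
theorem pattern11Count_singleton (a : V) : pattern11Count [a] = 0 := rfl

theorem pattern11Count_cons_cons (a b : V) (l : List V) :
    pattern11Count (a :: b :: l) = (if a = b then 1 else 0) + pattern11Count (b :: l) := by
  by_cases h : a = b <;> simp [pattern11Count, h]; omega

theorem pattern11Count_cons (a : V) (l : List V) :
    pattern11Count (a :: l) = (if l.head? = some a then 1 else 0) + pattern11Count l := by
  cases l with
  | nil => rfl
  | cons b l => simp [pattern11Count_cons_cons, eq_comm]

theorem pattern11Count_eq_zero_iff {u : List V} :
    pattern11Count u = 0 ↔ u.IsChain (· ≠ ·) := by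
  induction u with
  | nil => simp
  | cons a l ih =>
    cases l with
    | nil => simp
    | cons b l => simp [pattern11Count_cons_cons, ← ih]

theorem pattern11Count_add_le_append (l s : List V) :
    pattern11Count l + pattern11Count s ≤ pattern11Count (l ++ s) := by
  induction l with
  | nil => simp
  | cons a l ih =>
    cases l with
    | nil => simp [pattern11Count_cons a s]
    | cons b l =>
      simp only [List.cons_append, pattern11Count_cons_cons] at ih ⊢
      omega

theorem List.IsChain.count_add_one_eq {x y : V} (hxy : x ≠ y) {u : List V}
    (hu : u.IsChain (· ≠ ·)) (hmem_xy : ∀ a ∈ u, a = x ∨ a = y) (hne : u ≠ []) :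
    u.count x + 1 =
      u.count y + (if u.head hne = x then 1 else 0) + (if u.getLast hne = x then 1 else 0) := by
  induction u with
  | nil => contradiction
  | cons a l ih =>
    cases l with
    | nil => rcases hmem_xy a (by simp) with rfl | rfl <;> simp [hxy, hxy.symm]
    | cons b l =>
      rw [List.isChain_cons_cons] at hu
      have ih := ih hu.2 (fun c hc => hmem_xy c (List.mem_cons_of_mem a hc)) (List.cons_ne_nil b l)
      rw [List.getLast_cons_cons, List.count_cons, List.count_cons (l := b :: l)]
      simp only [List.head_cons] at ih ⊢
      rcases hmem_xy a (by simp) with rfl | rfl <;> rcases hmem_xy b (by simp) with rfl | rfl <;>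
        simp_all [Ne.symm hxy]
      omega

theorem List.IsChain.count_le_count_getLast {x y : V} {u : List V}
    (hu : u.IsChain (· ≠ ·)) (hmem_xy : ∀ a ∈ u, a = x ∨ a = y) (hne : u ≠ []) (z : V) :
    u.count z ≤ u.count (u.getLast hne) := by
  by_cases hz : z = u.getLast hne
  · rw [hz]
  by_cases hzu : z ∈ u
  · have hlast := hmem_xy _ (u.getLast_mem hne)
    have key := hu.count_add_one_eq (Ne.symm hz) (x := u.getLast hne) (fun a ha => by
      rcases hmem_xy a ha with rfl | rfl <;> rcases hmem_xy z hzu with rfl | rfl <;> tauto) hne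
    rw [if_pos rfl] at key
    omega
  · rw [List.count_eq_zero.mpr hzu]
    exact Nat.zero_le _

theorem List.IsChain.head_ne_getLast {x y : V} (hxy : x ≠ y) {u : List V}
    (hu : u.IsChain (· ≠ ·)) (hmem_xy : ∀ a ∈ u, a = x ∨ a = y) (hcount : u.count x = u.count y)
    (hne : u ≠ []) : u.head hne ≠ u.getLast hne := by
  intro h
  rcases hmem_xy _ (u.head_mem hne) with hx | hy
  · have := hu.count_add_one_eq hxy hmem_xy hne
    simp only [← h, hx, if_true] at this
    omega
  · have := hu.count_add_one_eq (Ne.symm hxy) (fun a ha => (hmem_xy a ha).symm) hne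
    simp only [← h, hy, if_true] at this
    omega

theorem List.IsChain.append_self {x y : V} (hxy : x ≠ y) {u : List V}
    (hu : u.IsChain (· ≠ ·)) (hmem_xy : ∀ a ∈ u, a = x ∨ a = y) (hcount : u.count x = u.count y) :
    (u ++ u).IsChain (· ≠ ·) := by
  refine hu.append hu ?_
  rcases eq_or_ne u [] with rfl | hne
  · simp
  · simpa [List.getLast?_eq_some_getLast hne, List.head?_eq_some_head hne] using
      (hu.head_ne_getLast hxy hmem_xy hcount hne).symm

theorem List.dedup_filter (p : V → Bool) (l : List V) : (l.filter p).dedup = l.dedup.filter p := by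
  induction l with
  | nil => rfl
  | cons a l ih =>
    by_cases hm : a ∈ l
    · by_cases ha : p a <;> simp [ha, hm, ih]
    · by_cases ha : p a <;> simp [ha, hm, ih, List.mem_filter]

theorem List.IsChain.append_dedup_filter {x y : V} (hxy : x ≠ y) {u : List V}
    (hu : u.IsChain (· ≠ ·)) (hmem_xy : ∀ a ∈ u, a = x ∨ a = y) (hx : x ∈ u) (hy : y ∈ u)
    (D : V → Bool) (hD : ∀ a ∈ u, ∀ b ∈ u, u.count a ≤ u.count b → D b → D a) :
    (u ++ u.dedup.filter D).IsChain (· ≠ ·) := by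
  obtain ⟨l, a, b, rfl⟩ : ∃ l a b, u = l ++ [a, b] := by
    rcases u.eq_nil_or_concat' with rfl | ⟨L, b, rfl⟩
    · simp at hx
    rcases L.eq_nil_or_concat' with rfl | ⟨l, a, rfl⟩
    · simp_all
    · exact ⟨l, a, b, by simp⟩
  have hab : a ≠ b := by simpa using hu.right_of_append
  have hmem : ∀ c ∈ l ++ [a, b], c = a ∨ c = b := by
    intro c hc
    have ha := hmem_xy a (by simp)
    have hb := hmem_xy b (by simp)
    rcases hmem_xy c hc with rfl | rfl <;> grind
  have hdedup : (l ++ [a, b]).dedup = [a, b] := by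
    rw [List.Subset.dedup_append_right (fun c hc => by simpa using hmem c (by simp [hc])),
      List.Nodup.dedup (by simpa using hab)]
  have hcount : (l ++ [a, b]).count a ≤ (l ++ [a, b]).count b := by
    simpa using hu.count_le_count_getLast hmem_xy (by simp) a
  rw [hdedup]
  cases hDa : D a
  · have hDb : D b = false := by
      by_contra hDb
      simpa [hDa] using hD a (by simp) b (by simp) hcount (by simpa using hDb)
    simpa [hDa, hDb] using hu
  · refine hu.append ?_ ?_ <;> cases hDb : D b <;> simp [hDa, hDb, hab, Ne.symm hab]

theorem isK11Rep_zero_iff {G : SimpleGraph V} {w : List V} :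
    IsK11Rep G 0 w ↔ (∀ v, v ∈ w) ∧ ∀ x y, x ≠ y →
      (G.Adj x y ↔ (w.filter fun a => decide (a = x ∨ a = y)).IsChain (· ≠ ·)) := by
  simp only [IsK11Rep, Nat.le_zero, pattern11Count_eq_zero_iff]

theorem IsK11Rep.append_finalPerm_filter {G : SimpleGraph V} {w : List V} (hw : IsK11Rep G 0 w)
    (m : ℕ) : IsK11Rep G 0 (w ++ (finalPerm w).filter fun a => w.count a < m) := by
  rw [isK11Rep_zero_iff] at hw ⊢
  obtain ⟨hmem, hadj⟩ := hw
  refine ⟨fun v => List.mem_append_left _ (hmem v), fun x y hxy => (hadj x y hxy).trans ?_⟩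
  have hcount : ∀ a ∈ w.filter fun a => decide (a = x ∨ a = y),
      (w.filter fun a => decide (a = x ∨ a = y)).count a = w.count a :=
    fun a ha => List.count_filter (List.mem_filter.mp ha).2
  rw [List.filter_append, finalPerm, List.filter_comm, ← List.dedup_filter]
  refine ⟨fun hu => hu.append_dedup_filter hxy (by simp) (by simp [hmem]) (by simp [hmem]) _
    (fun a ha b hb hab hb' => ?_), List.IsChain.left_of_append⟩
  rw [hcount a ha, hcount b hb] at hab
  simp only [decide_eq_true_eq] at hb' ⊢
  omega

theorem count_append_finalPerm_filter {w : List V} {v : V} (hv : v ∈ w) (m : ℕ) :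
    (w ++ (finalPerm w).filter fun a => w.count a < m).count v =
      w.count v + if w.count v < m then 1 else 0 := by
  by_cases h : w.count v < m
  · rw [List.count_append, List.count_filter (by simpa using h), finalPerm, List.count_dedup,
      if_pos hv, if_pos h]
  · have hv' : v ∉ (finalPerm w).filter fun a => w.count a < m := by simp [h]
    rw [List.count_append, List.count_eq_zero.mpr hv', if_neg h]

theorem IsK11Rep.uniformK11Rep {G : SimpleGraph V} {w : List V} {m n : ℕ} (hw : IsK11Rep G 0 w)
    (hle : ∀ v, w.count v ≤ m) (hge : ∀ v, m ≤ w.count v + n) : UniformK11Rep G m 0 := by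
  induction n generalizing w with
  | zero => exact ⟨w, hw, fun v => le_antisymm (hle v) (hge v)⟩
  | succ n ih =>
    refine ih (hw.append_finalPerm_filter m) (fun v => ?_) (fun v => ?_) <;>
    · rw [count_append_finalPerm_filter (hw.1 v)]
      have := hle v
      have := hge v
      split_ifs <;> omega

theorem exists_uniformK11Rep {G : SimpleGraph V} (hG : K11Representable G 0) :
    ∃ t, UniformK11Rep G t 0 :=
  let ⟨w, hw⟩ := hG
  ⟨w.length, hw.uniformK11Rep (fun _ => List.count_le_length) (fun _ => Nat.le_add_left _ _)⟩

def doubleFirst : Finset V → List V → List V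
  | _, [] => []
  | F, a :: l => if a ∈ F then a :: a :: doubleFirst (F.erase a) l else a :: doubleFirst F l

theorem subset_doubleFirst (F : Finset V) (l : List V) : l ⊆ doubleFirst F l := by
  induction l generalizing F with
  | nil => simp
  | cons a l ih =>
    rw [doubleFirst]
    split_ifs
    · exact List.cons_subset_cons a (List.Subset.trans (ih _) (List.subset_cons_self a _))
    · exact List.cons_subset_cons a (ih F)

theorem head?_doubleFirst (F : Finset V) (l : List V) : (doubleFirst F l).head? = l.head? := by
  cases l with
  | nil => rfl
  | cons a l => rw [doubleFirst]; split_ifs <;> rfl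

theorem filter_doubleFirst (p : V → Prop) [DecidablePred p] (F : Finset V) (l : List V) :
    (doubleFirst F l).filter (fun a => decide (p a)) =
      doubleFirst (F.filter p) (l.filter fun a => decide (p a)) := by
  induction l generalizing F with
  | nil => rfl
  | cons a l ih =>
    by_cases ha : a ∈ F <;> by_cases hp : p a
    · simp [doubleFirst, ha, hp, ih, Finset.filter_erase]
    · simp [doubleFirst, ha, hp, ih, Finset.filter_erase]
    · simp [doubleFirst, ha, hp, ih]
    · simp [doubleFirst, ha, hp, ih]

theorem pattern11Count_doubleFirst {F : Finset V} {l : List V} (hF : ∀ a ∈ F, a ∈ l) :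
    pattern11Count (doubleFirst F l) = pattern11Count l + F.card := by
  induction l generalizing F with
  | nil => simp [doubleFirst, Finset.eq_empty_of_forall_notMem (fun a ha => by simpa using hF a ha)]
  | cons a l ih =>
    rw [doubleFirst]
    split_ifs with ha
    · rw [pattern11Count_cons_cons, pattern11Count_cons, head?_doubleFirst, pattern11Count_cons,
        ih (fun b hb => ?_), Finset.card_erase_of_mem ha]
      · have := Finset.card_pos.mpr ⟨a, ha⟩
        simp only [if_true]
        omega
      · obtain ⟨hba, hbF⟩ := Finset.mem_erase.mp hb
        exact (List.mem_cons.mp (hF b hbF)).resolve_left hba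
    · rw [pattern11Count_cons, head?_doubleFirst, pattern11Count_cons, ih (fun b hb => ?_)]
      · omega
      · exact (List.mem_cons.mp (hF b hb)).resolve_left (by rintro rfl; exact ha hb)

end

theorem k11Representable_deleteCliqueEdges_general {V : Type*} [DecidableEq V]
    (G : SimpleGraph V) (K : Set V) (h : K11Representable G 0) :
    K11Representable (G.deleteEdges {e : Sym2 V | ∀ u ∈ e, u ∈ K}) 1 := by
  classical
  obtain ⟨t, w, ⟨hmem, hadj⟩, hcount⟩ := exists_uniformK11Rep h
  refine ⟨doubleFirst (w.toFinset.filter (· ∈ K)) (w ++ w),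
    fun a => subset_doubleFirst _ _ (List.mem_append_left _ (hmem a)), fun x y hxy => ?_⟩
  have hK : ((w.toFinset.filter (· ∈ K)).filter (fun a => a = x ∨ a = y)).card ≤ 1 ↔
      ¬(x ∈ K ∧ y ∈ K) := by
    simp only [Finset.card_le_one, Finset.mem_filter, List.mem_toFinset, hmem, true_and, and_imp,
      not_and]
    grind
  rw [filter_doubleFirst, List.filter_append, pattern11Count_doubleFirst (by simp [hmem])]
  simp only [SimpleGraph.deleteEdges_adj, Set.mem_ofPred_eq, Sym2.forall_mem_pair, hadj x y hxy,
    ← hK, Nat.le_zero]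
  set u := w.filter fun a => decide (a = x ∨ a = y)
  by_cases hu : pattern11Count u = 0
  · have huu : pattern11Count (u ++ u) = 0 := pattern11Count_eq_zero_iff.mpr <|
      (pattern11Count_eq_zero_iff.mp hu).append_self hxy (by simp [u])
        (by simp [u, List.count_filter, hcount])
    rw [hu, huu, zero_add]
    exact and_iff_right rfl
  · have := pattern11Count_add_le_append u u
    constructor <;> intro <;> omega

/-- if `G` is word-representable and `K` is a vertex subset, then the
graph obtained from `G` by deleting all edges with both endpoints in `K` is
1-11-representable. -/
theorem k11Representable_deleteCliqueEdges {V : Type*} [DecidableEq V] [Fintype V]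
    (G : SimpleGraph V) (K : Set V) (h : K11Representable G 0) :
    K11Representable (G.deleteEdges {e : Sym2 V | ∀ u ∈ e, u ∈ K}) 1 :=
  k11Representable_deleteCliqueEdges_general G K h
end

section
/- The class of word-representable graphs is strictly contained in the class of 1-11-representable graphs: every 0-11-representable simple graph is 1-11-representable, and the wheel graph W₅ is 1-11-representable but not 0-11-representable. In particular, the word 4325161521324354 over the alphabet {1,2,3,4,5,6} is a 1-11-representant of W₅. -/
/-- The wheel graph `W₅` on the vertex set `{1,2,3,4,5,6}` (as `Fin 6`, where `6 = 0`):
the 5-cycle `1-2-3-4-5-1` together with all edges from `6` to `1,2,3,4,5`. -/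
def wheelW5 : SimpleGraph (Fin 6) :=
  SimpleGraph.fromRel (fun a b =>
    (a, b) ∈ [((1 : Fin 6), 2), (2, 3), (3, 4), (4, 5), (5, 1),
              (6, 1), (6, 2), (6, 3), (6, 4), (6, 5)])


section Pattern11

variable {V : Type*} [DecidableEq V]

theorem pattern11Count_eq_zero_iff_isChain :
    ∀ {l : List V}, pattern11Count l = 0 ↔ l.IsChain (· ≠ ·)
  | [] => by simp
  | [a] => by simp
  | a :: b :: l => by
    rw [pattern11Count_cons_cons, List.isChain_cons_cons, ← pattern11Count_eq_zero_iff_isChain]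
    split_ifs <;> simp_all

theorem pattern11Count_append_le :
    ∀ u v : List V, pattern11Count (u ++ v) ≤ pattern11Count u + pattern11Count v + 1
  | [], v => by simp
  | [a], [] => by simp
  | [a], b :: v => by
    rw [List.singleton_append, pattern11Count_cons_cons]
    split_ifs <;> simp [Nat.add_comm]
  | a :: b :: u, v => by
    have := pattern11Count_append_le (b :: u) v
    simp only [List.cons_append, pattern11Count_cons_cons] at *
    omega

theorem le_pattern11Count_append :
    ∀ u v : List V, pattern11Count u + pattern11Count v ≤ pattern11Count (u ++ v)
  | [], v => by simp
  | [a], [] => by simp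
  | [a], b :: v => by
    rw [List.singleton_append, pattern11Count_cons_cons]
    simp
  | a :: b :: u, v => by
    have := le_pattern11Count_append (b :: u) v
    simp only [List.cons_append, pattern11Count_cons_cons] at *
    omega

theorem K11Representable.one_of_zero {G : SimpleGraph V}
    (h : K11Representable G 0) : K11Representable G 1 := by
  obtain ⟨w, hmem, hadj⟩ := h
  refine ⟨w ++ w, fun v => List.mem_append_left _ (hmem v), fun x y hxy => ?_⟩
  rw [hadj x y hxy, List.filter_append]
  set u := w.filter (fun a => decide (a = x ∨ a = y))
  have := pattern11Count_append_le u u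
  have := le_pattern11Count_append u u
  omega

end Pattern11

section Leads

variable {V : Type*} [DecidableEq V]

/-- `x` leads `y` in `w` if every prefix of `w` contains as many `x`s as `y`s or one more; for
`x ≠ y` this says that `w|_{x,y}` is `x y x y …`. -/
def Leads (w : List V) (x y : V) : Prop :=
  ∀ n, (w.take n).count y ≤ (w.take n).count x ∧ (w.take n).count x ≤ (w.take n).count y + 1

def Alternates (w : List V) (x y : V) : Prop := Leads w x y ∨ Leads w y x

variable {w l : List V} {a x y z u v : V}

theorem leads_cons (hxy : x ≠ y) :
    Leads (a :: l) x y ↔ (a = x ∧ Leads l y x) ∨ (a ≠ x ∧ a ≠ y ∧ Leads l x y) := by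
  constructor
  · intro h
    by_cases hax : a = x
    · subst hax
      refine .inl ⟨rfl, fun n => ?_⟩
      have := h (n + 1)
      simp [hxy] at this
      omega
    · by_cases hay : a = y
      · subst hay
        have := h 1
        simp [Ne.symm hxy] at this
      · refine .inr ⟨hax, hay, fun n => ?_⟩
        have := h (n + 1)
        simpa [hax, hay] using this
  · rintro (⟨rfl, h⟩ | ⟨hax, hay, h⟩) (_ | n)
    · simp
    · have := h n
      simp [hxy]
      omega
    · simp
    · simpa [hax, hay] using h n

theorem filter_eq_or_comm (w : List V) (x y : V) :
    w.filter (fun a => decide (a = y ∨ a = x)) = w.filter (fun a => decide (a = x ∨ a = y)) := by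
  simp only [or_comm]

theorem leads_iff_isChain_cons_filter (hxy : x ≠ y) :
    Leads w x y ↔ (y :: w.filter (fun a => decide (a = x ∨ a = y))).IsChain (· ≠ ·) := by
  induction w generalizing x y with
  | nil => simp [Leads]
  | cons a l ih =>
    rw [leads_cons hxy]
    by_cases hax : a = x
    · subst hax
      rw [ih hxy.symm, filter_eq_or_comm]
      simp [hxy.symm]
    · by_cases hay : a = y
      · subst hay
        simp [hax]
      · simp [hax, hay, ih hxy]

theorem pattern11Count_filter_eq_zero_iff_alternates (hxy : x ≠ y) :
    pattern11Count (w.filter (fun a => decide (a = x ∨ a = y))) = 0 ↔ Alternates w x y := by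
  rw [pattern11Count_eq_zero_iff_isChain, Alternates, leads_iff_isChain_cons_filter hxy,
    leads_iff_isChain_cons_filter hxy.symm, filter_eq_or_comm w x y]
  match h : w.filter (fun a => decide (a = x ∨ a = y)) with
  | [] => simp
  | b :: f =>
    have hb : b ∈ w.filter (fun a => decide (a = x ∨ a = y)) := h ▸ List.mem_cons_self
    rcases (List.mem_filter.1 hb).2 |> of_decide_eq_true with rfl | rfl <;> simp [hxy, hxy.symm]

theorem not_leads_and_leads_of_mem (hxy : x ≠ y) (hx : x ∈ w) :
    ¬ (Leads w x y ∧ Leads w y x) := by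
  induction w with
  | nil => simp at hx
  | cons a l ih =>
    rw [leads_cons hxy, leads_cons hxy.symm]
    by_cases hax : a = x
    · simp [hax, hxy]
    · by_cases hay : a = y
      · simp [hay, hxy.symm]
      · simpa [hax, hay] using ih (List.mem_of_ne_of_mem (Ne.symm hax) hx)

theorem Alternates.xor_of_mem (h : Alternates w x y) (hxy : x ≠ y) (hx : x ∈ w) :
    Xor (Leads w x y) (Leads w y x) := by
  have := not_leads_and_leads_of_mem hxy hx
  unfold Alternates at h
  unfold Xor
  tauto

theorem Leads.and_leads_of_not_alternates (hxu : Leads w x u) (huz : Leads w u z)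
    (hxz : ¬ Alternates w x z) (hxv : Alternates w x v) (hvz : Alternates w v z) :
    Leads w x v ∧ Leads w v z := by
  by_contra h
  refine hxz (.inl fun n => ?_)
  have := hxu n
  have := huz n
  rcases hxv with hxv | hvx <;> rcases hvz with hvz | hzv
  · exact absurd ⟨hxv, hvz⟩ h
  · have := hxv n; have := hzv n; omega
  · have := hvx n; have := hvz n; omega
  · have := hvx n; have := hzv n; omega

theorem leads_iff_leads_iff_of_not_alternates (hxz : ¬ Alternates w x z)
    (hxu : Xor (Leads w x u) (Leads w u x)) (huz : Xor (Leads w u z) (Leads w z u))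
    (hxv : Xor (Leads w x v) (Leads w v x)) (hvz : Xor (Leads w v z) (Leads w z v)) :
    ((Leads w x u ↔ Leads w u z) ↔ (Leads w x v ↔ Leads w v z)) := by
  have hzx : ¬ Alternates w z x := fun h => hxz h.symm
  have hxuv : Leads w x u → Leads w u z → Leads w x v ∧ Leads w v z :=
    fun h h' => h.and_leads_of_not_alternates h' hxz hxv.or hvz.or
  have hxvu : Leads w x v → Leads w v z → Leads w x u ∧ Leads w u z :=
    fun h h' => h.and_leads_of_not_alternates h' hxz hxu.or huz.or
  have hzuv : Leads w z u → Leads w u x → Leads w z v ∧ Leads w v x :=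
    fun h h' => h.and_leads_of_not_alternates h' hzx hvz.or.symm hxv.or.symm
  have hzvu : Leads w z v → Leads w v x → Leads w z u ∧ Leads w u x :=
    fun h h' => h.and_leads_of_not_alternates h' hzx huz.or.symm hxu.or.symm
  rcases hxu with ⟨_, _⟩ | ⟨_, _⟩ <;> rcases huz with ⟨_, _⟩ | ⟨_, _⟩ <;>
    rcases hxv with ⟨_, _⟩ | ⟨_, _⟩ <;> rcases hvz with ⟨_, _⟩ | ⟨_, _⟩ <;> simp_all

end Leads

instance : DecidableRel wheelW5.Adj := by
  unfold wheelW5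
  infer_instance

theorem not_forall_iff_add_one_iff_not_iff_add_two (o s : Fin 5 → Prop) :
    ¬ ∀ i, ((o i ↔ o (i + 1)) ↔ ¬(s i ↔ s (i + 2))) := by
  classical
  intro h
  have key : ∀ o s : Fin 5 → Bool, ¬ ∀ i, ((o i = o (i + 1)) ↔ (s i ≠ s (i + 2))) := by
    decide
  exact key (fun i => decide (o i)) (fun i => decide (s i)) (by simpa using h)

theorem not_k11Representable_wheelW5_zero : ¬ K11Representable wheelW5 0 := by
  rintro ⟨w, hmem, hadj⟩
  have halt : ∀ x y, x ≠ y → (wheelW5.Adj x y ↔ Alternates w x y) := fun x y hxy =>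
    (hadj x y hxy).trans (Nat.le_zero.trans (pattern11Count_filter_eq_zero_iff_alternates hxy))
  have hxor : ∀ x y, wheelW5.Adj x y → Xor (Leads w x y) (Leads w y x) := fun x y h =>
    ((halt x y h.ne).1 h).xor_of_mem h.ne (hmem x)
  have hcycle : ∀ i : Fin 5,
      wheelW5.Adj i.succ (i + 1).succ ∧ wheelW5.Adj (i + 1).succ (i + 2).succ := by decide
  have hspoke : ∀ i : Fin 5, wheelW5.Adj i.succ 0 := by decide
  have hchord : ∀ i : Fin 5, i.succ ≠ (i + 2).succ ∧ ¬ wheelW5.Adj i.succ (i + 2).succ := by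
    decide
  refine not_forall_iff_add_one_iff_not_iff_add_two (fun i => Leads w i.succ (i + 1).succ)
    (fun i => Leads w i.succ 0) fun i => ?_
  have h := leads_iff_leads_iff_of_not_alternates
    ((halt _ _ (hchord i).1).not.1 (hchord i).2) (hxor _ _ (hcycle i).1)
    (hxor _ _ (hcycle i).2) (hxor _ _ (hspoke i)) (hxor _ _ (hspoke (i + 2)).symm)
  have h0 := hxor _ _ (hspoke (i + 2))
  rw [show i + 1 + 1 = i + 2 by rw [add_assoc]; rfl, h]
  rcases h0 with ⟨hz, hz'⟩ | ⟨hz, hz'⟩ <;> simp [hz, hz']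

/-- the class of word-representable (0-11-representable) graphs is strictly
contained in the class of 1-11-representable graphs: every 0-11-representable graph is
1-11-representable, while `W₅` is 1-11-representable (with the explicit
1-11-representant 4325161521324354) but not 0-11-representable. -/
theorem wordRepresentable_ssubset_one_eleven :
    (∀ (V : Type) [DecidableEq V] [Fintype V] (G : SimpleGraph V),
        K11Representable G 0 → K11Representable G 1) ∧
    IsK11Rep wheelW5 1
      ([4, 3, 2, 5, 1, 6, 1, 5, 2, 1, 3, 2, 4, 3, 5, 4] : List (Fin 6)) ∧
    K11Representable wheelW5 1 ∧
    ¬ K11Representable wheelW5 0 := by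
  have hrep : IsK11Rep wheelW5 1
      ([4, 3, 2, 5, 1, 6, 1, 5, 2, 1, 3, 2, 4, 3, 5, 4] : List (Fin 6)) := ⟨by decide, by decide⟩
  exact ⟨fun _ _ _ _ => K11Representable.one_of_zero, hrep, ⟨_, hrep⟩,
    not_k11Representable_wheelW5_zero⟩
end
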